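/- Let a ≠ 0, 0 < s ≤ 1, α² + a² = s², |β| ≤ 1/40, |γ| ≤ 1/40, and D the closed unit disc in ℝ². Define v'_±(x,y) = α + βy + γxy ± γ²(9/4 − y²/4). Then Q(v'₊) ≤ 0 and Q(v'₋) ≥ 0 on D, where Q(v) = ∂/∂x[(v² + y² + a²)^{−1/2} ∂v/∂x] + 2 ∂²v/∂y². -/

import Mathlib

/-! For `v = α + βy + γxy + ε(9/4 - y²/4)` one has `v_x = γy` and `v_yy = -ε/2`, so
`Q(v) = -γ² · v y² W^{-3/2} - ε` with `W = v² + y² + a²`. Since `|v| ≤ W^{1/2}` and `y² ≤ W`,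
the factor `v y² W^{-3/2}` lies in `[-1, 1]`, so `Q(v) ∈ [-γ² - ε, γ² - ε]`, and `ε = ±γ²`
gives the two signs. -/

/-- The divergence-form quasilinear operator
`Q(v) = ∂/∂x[(v² + y² + a²)^{-1/2} ∂v/∂x] + 2 ∂²v/∂y²`. -/
noncomputable def Qop (a : ℝ) (v : ℝ × ℝ → ℝ) (p : ℝ × ℝ) : ℝ :=
  fderiv ℝ (fun q => ((v q) ^ 2 + q.2 ^ 2 + a ^ 2) ^ (-(1 : ℝ) / 2)
      * fderiv ℝ v q ((1 : ℝ), (0 : ℝ))) p ((1 : ℝ), (0 : ℝ))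
  + 2 * fderiv ℝ (fun q => fderiv ℝ v q ((0 : ℝ), (1 : ℝ))) p ((0 : ℝ), (1 : ℝ))

open ContinuousLinearMap

theorem abs_mul_sq_mul_rpow_neg_three_halves_le_one (V Y A : ℝ) (hA : A ≠ 0) :
    |V * Y ^ 2 * (V ^ 2 + Y ^ 2 + A ^ 2) ^ (-(3 : ℝ) / 2)| ≤ 1 := by
  set W := V ^ 2 + Y ^ 2 + A ^ 2
  have hW : 0 < W := by positivity
  have hV : |V| ≤ W ^ (1 / 2 : ℝ) := by
    rw [← Real.sqrt_eq_rpow, ← Real.sqrt_sq_eq_abs]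
    exact Real.sqrt_le_sqrt (by simp only [W]; nlinarith [sq_nonneg Y, sq_nonneg A])
  have hY : Y ^ 2 ≤ W := by simp only [W]; nlinarith [sq_nonneg V, sq_nonneg A]
  have hW32 : W ^ (3 / 2 : ℝ) = W ^ (1 / 2 : ℝ) * W := by
    rw [show (3 / 2 : ℝ) = 1 / 2 + 1 by norm_num, Real.rpow_add hW, Real.rpow_one]
  rw [abs_mul, abs_mul, abs_of_nonneg (sq_nonneg Y), abs_of_pos (Real.rpow_pos_of_pos hW _),
    show -(3 : ℝ) / 2 = -(3 / 2) by ring, Real.rpow_neg hW.le, ← div_eq_mul_inv,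
    div_le_one (Real.rpow_pos_of_pos hW _), hW32]
  exact mul_le_mul hV hY (sq_nonneg Y) (Real.rpow_nonneg hW.le _)

theorem fderiv_flux_apply_fst {a : ℝ} (ha : a ≠ 0) {v : ℝ × ℝ → ℝ} {L : ℝ × ℝ →L[ℝ] ℝ}
    {p : ℝ × ℝ} (hv : HasFDerivAt v L p) (c : ℝ) :
    fderiv ℝ (fun q : ℝ × ℝ => (v q ^ 2 + q.2 ^ 2 + a ^ 2) ^ (-(1 : ℝ) / 2) * (c * q.2)) p (1, 0)
      = -(v p * L (1, 0) * c * p.2 * (v p ^ 2 + p.2 ^ 2 + a ^ 2) ^ (-(3 : ℝ) / 2)) := by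
  have hW : 0 < v p ^ 2 + p.2 ^ 2 + a ^ 2 := by positivity
  have hflux := ((((hv.pow 2).add (hasFDerivAt_snd.pow 2)).add_const (a ^ 2)).rpow_const
    (p := -(1 : ℝ) / 2) (Or.inl hW.ne')).mul (hasFDerivAt_snd.const_mul c)
  rw [HasFDerivAt.fderiv (f := fun q : ℝ × ℝ =>
      (v q ^ 2 + q.2 ^ 2 + a ^ 2) ^ (-(1 : ℝ) / 2) * (c * q.2)) hflux,
    show -(1 : ℝ) / 2 - 1 = -(3 : ℝ) / 2 by norm_num]
  simp only [Pi.add_apply, Nat.add_one_sub_one, pow_one, nsmul_eq_mul, Nat.cast_ofNat, smul_add,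
    add_apply, smul_apply, coe_snd', smul_eq_mul, mul_zero, add_zero, zero_add]
  ring

section TrialFunction

variable (α β γ ε : ℝ)

noncomputable def trial (q : ℝ × ℝ) : ℝ :=
  α + β * q.2 + γ * q.1 * q.2 + ε * (9 / 4 - q.2 ^ 2 / 4)

theorem hasFDerivAt_trial (q : ℝ × ℝ) :
    HasFDerivAt (trial α β γ ε)
      ((γ * q.2) • fst ℝ ℝ ℝ + (β + γ * q.1 - ε / 2 * q.2) • snd ℝ ℝ ℝ) q := by
  have h := ((hasFDerivAt_snd.const_mul β).const_add α).add
    (((hasFDerivAt_fst.const_mul γ).mul hasFDerivAt_snd).add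
      ((((hasFDerivAt_snd (𝕜 := ℝ) (p := q)).pow 2).const_mul (-(ε / 4))).const_add (ε * 9 / 4)))
  refine (h.congr_of_eventuallyEq (.of_forall fun x => ?_)).congr_fderiv ?_
  · simp only [trial, Pi.add_apply, Pi.mul_apply]; ring
  · ext <;> simp <;> ring

theorem fderiv_trial_apply_fst (q : ℝ × ℝ) : fderiv ℝ (trial α β γ ε) q (1, 0) = γ * q.2 := by
  simp [(hasFDerivAt_trial α β γ ε q).fderiv]

theorem fderiv_trial_apply_snd (q : ℝ × ℝ) :
    fderiv ℝ (trial α β γ ε) q (0, 1) = β + γ * q.1 - ε / 2 * q.2 := by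
  simp [(hasFDerivAt_trial α β γ ε q).fderiv]

theorem Qop_trial {a : ℝ} (ha : a ≠ 0) (p : ℝ × ℝ) :
    Qop a (trial α β γ ε) p = -γ ^ 2 * (trial α β γ ε p * p.2 ^ 2
      * (trial α β γ ε p ^ 2 + p.2 ^ 2 + a ^ 2) ^ (-(3 : ℝ) / 2)) - ε := by
  have hvy : HasFDerivAt (fun q : ℝ × ℝ => β + γ * q.1 - ε / 2 * q.2)
      (γ • fst ℝ ℝ ℝ - (ε / 2) • snd ℝ ℝ ℝ) p :=
    (hasFDerivAt_fst.const_mul γ |>.const_add β).sub (hasFDerivAt_snd.const_mul (ε / 2))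
  simp only [Qop, fderiv_trial_apply_fst, fderiv_trial_apply_snd,
    fderiv_flux_apply_fst ha (hasFDerivAt_trial α β γ ε p), hvy.fderiv]
  simp only [add_apply, smul_apply, coe_fst', smul_eq_mul, mul_one, coe_snd', mul_zero, add_zero,
    sub_apply, zero_sub, mul_neg, neg_mul]
  ring

theorem Qop_trial_mem_Icc {a : ℝ} (ha : a ≠ 0) (p : ℝ × ℝ) :
    Qop a (trial α β γ ε) p ∈ Set.Icc (-γ ^ 2 - ε) (γ ^ 2 - ε) := by
  rw [Qop_trial α β γ ε ha p]
  obtain ⟨hlo, hhi⟩ := abs_le.mp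
    (abs_mul_sq_mul_rpow_neg_three_halves_le_one (trial α β γ ε p) p.2 a ha)
  constructor <;> nlinarith [sq_nonneg γ]

end TrialFunction

theorem stmt_8_general (a α β γ : ℝ) (ha : a ≠ 0) :
    ∀ p : ℝ × ℝ, p.1 ^ 2 + p.2 ^ 2 ≤ 1 →
      Qop a (fun q => α + β * q.2 + γ * q.1 * q.2
          + γ ^ 2 * (9 / 4 - q.2 ^ 2 / 4)) p ≤ 0 ∧
      0 ≤ Qop a (fun q => α + β * q.2 + γ * q.1 * q.2
          - γ ^ 2 * (9 / 4 - q.2 ^ 2 / 4)) p := by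
  intro p _
  have hminus : (fun q : ℝ × ℝ => α + β * q.2 + γ * q.1 * q.2 - γ ^ 2 * (9 / 4 - q.2 ^ 2 / 4))
      = trial α β γ (-γ ^ 2) := by
    funext q
    simp only [trial]
    ring
  rw [hminus]
  exact ⟨(Qop_trial_mem_Icc α β γ (γ ^ 2) ha p).2.trans_eq (sub_self _),
    le_of_eq_of_le (by ring) (Qop_trial_mem_Icc α β γ (-γ ^ 2) ha p).1⟩

/-- Proposition 4.10: `v'₊` is a supersolution and `v'₋` a subsolution of `Q(v) = 0`
on the closed unit disc. -/
theorem stmt_8 (a s α β γ : ℝ) (ha : a ≠ 0) (hs0 : 0 < s) (hs1 : s ≤ 1)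
    (hα : α ^ 2 + a ^ 2 = s ^ 2) (hβ : |β| ≤ 1 / 40) (hγ : |γ| ≤ 1 / 40) :
    ∀ p : ℝ × ℝ, p.1 ^ 2 + p.2 ^ 2 ≤ 1 →
      Qop a (fun q => α + β * q.2 + γ * q.1 * q.2
          + γ ^ 2 * (9 / 4 - q.2 ^ 2 / 4)) p ≤ 0 ∧
      0 ≤ Qop a (fun q => α + β * q.2 + γ * q.1 * q.2
          - γ ^ 2 * (9 / 4 - q.2 ^ 2 / 4)) p :=
  stmt_8_general a α β γ ha
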